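/- Let X = ℝ², let α ≥ β > 0, set C_1 = {(x_1, x_2) ∈ ℝ² : |x_1 − x_2| ≤ α} and C_2 = {(x_1, x_2) ∈ ℝ² : |x_1 − x_2| ≥ β}, and set ε = β/5. Let P_2 denote the map P_2(ξ,η) = (ξ,η) if |ξ−η| ≥ β, ((ξ+η−β)/2, (ξ+η+β)/2) if |ξ−η| < β and ξ ≤ η, and ((ξ+η+β)/2, (ξ+η−β)/2) if |ξ−η| < β and ξ > η (so P_2(x) is a nearest point of C_2 to x), and let P_1 be the projection onto C_1. Fix ξ ∈ ℝ and define the product-space Douglas–Rachford iteration on ℝ² × ℝ²: given 𝐱_k = (x_{k,1}, x_{k,2}), set x̄_k = (x_{k,1} + x_{k,2})/2 and x_{k+1,i} = x_{k,i} − x̄_k + P_i(2x̄_k − x_{k,i}) for i = 1, 2. If 𝐱_0 = ((ξ, ξ−ε), (ξ−2ε, ξ+ε)), then for every k ≥ 0: 𝐱_{2k} = ((ξ, ξ−ε), (ξ−2ε, ξ+ε)) and 𝐱_{2k+1} = ((ξ−ε, ξ), (ξ+ε, ξ−2ε)); consequently x̄_{2k} = (ξ−ε, ξ) and x̄_{2k+1}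 = (ξ, ξ−ε), so the iteration cycles with period 2 and does not converge (when ε > 0). -/
import Mathlib


open scoped Classical

noncomputable def pt (a b : ℝ) : EuclideanSpace ℝ (Fin 2) :=
  (WithLp.equiv 2 (Fin 2 → ℝ)).symm ![a, b]

/-- Cycling of the product-space Douglas–Rachford iteration for the sets
`C_1 = {|x_1 - x_2| ≤ α}` and the nonconvex `C_2 = {|x_1 - x_2| ≥ β}` in ℝ²,
where `0 < β ≤ α` and `ε = β/5`: starting from
`𝐱_0 = ((ξ, ξ-ε), (ξ-2ε, ξ+ε))`, the iterates cycle with period 2,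
`𝐱_{2k} = 𝐱_0`, `𝐱_{2k+1} = ((ξ-ε, ξ), (ξ+ε, ξ-2ε))`, hence
`x̄_{2k} = (ξ-ε, ξ)`, `x̄_{2k+1} = (ξ, ξ-ε)`, and `(x̄_k)` does not converge. -/
theorem stmt_17 (α β : ℝ) (hβ : 0 < β) (hβα : β ≤ α) (ξ ε : ℝ) (hε : ε = β / 5)
    (C₁ C₂ : Set (EuclideanSpace ℝ (Fin 2)))
    (hC₁ : C₁ = {z | |z 0 - z 1| ≤ α})
    (hC₂ : C₂ = {z | β ≤ |z 0 - z 1|})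
    (P₁ P₂ : EuclideanSpace ℝ (Fin 2) → EuclideanSpace ℝ (Fin 2))
    (hP₁ : ∀ z, P₁ z ∈ C₁ ∧ ∀ c ∈ C₁, ‖z - P₁ z‖ ≤ ‖z - c‖)
    (hP₂ : ∀ z, P₂ z =
      if β ≤ |z 0 - z 1| then z
      else if z 0 ≤ z 1 then pt ((z 0 + z 1 - β) / 2) ((z 0 + z 1 + β) / 2)
      else pt ((z 0 + z 1 + β) / 2) ((z 0 + z 1 - β) / 2))
    (x₁ x₂ xbar : ℕ → EuclideanSpace ℝ (Fin 2))
    (hxbar : ∀ k, xbar k = (2 : ℝ)⁻¹ • (x₁ k + x₂ k))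
    (hx₁0 : x₁ 0 = pt ξ (ξ - ε)) (hx₂0 : x₂ 0 = pt (ξ - 2 * ε) (ξ + ε))
    (hx₁ : ∀ k, x₁ (k + 1) = x₁ k - xbar k + P₁ ((2 : ℝ) • xbar k - x₁ k))
    (hx₂ : ∀ k, x₂ (k + 1) = x₂ k - xbar k + P₂ ((2 : ℝ) • xbar k - x₂ k)) :
    (∀ k : ℕ,
      x₁ (2 * k) = pt ξ (ξ - ε) ∧ x₂ (2 * k) = pt (ξ - 2 * ε) (ξ + ε) ∧
      x₁ (2 * k + 1) = pt (ξ - ε) ξ ∧ x₂ (2 * k + 1) = pt (ξ + ε) (ξ - 2 * ε) ∧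
      xbar (2 * k) = pt (ξ - ε) ξ ∧ xbar (2 * k + 1) = pt ξ (ξ - ε)) ∧
    ¬ ∃ L, Filter.Tendsto xbar Filter.atTop (nhds L) := by
  subst hε
  have he0 : 0 < β / 5 := by linarith
  have hext : ∀ x y : EuclideanSpace ℝ (Fin 2), x 0 = y 0 → x 1 = y 1 → x = y := by
    intro x y h0 h1; ext i; fin_cases i <;> assumption
  have hP₁id : ∀ z : EuclideanSpace ℝ (Fin 2), |z 0 - z 1| ≤ α → P₁ z = z := by
    intro z hz
    have hmem : z ∈ C₁ := by rw [hC₁]; exact hz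
    have h := (hP₁ z).2 z hmem
    rw [sub_self, norm_zero] at h
    have h2 : ‖z - P₁ z‖ = 0 := le_antisymm h (norm_nonneg _)
    exact (sub_eq_zero.mp (norm_eq_zero.mp h2)).symm
  have stepA : ∀ k, x₁ k = pt ξ (ξ - β / 5) → x₂ k = pt (ξ - 2 * (β / 5)) (ξ + β / 5) →
      xbar k = pt (ξ - β / 5) ξ ∧ x₁ (k + 1) = pt (ξ - β / 5) ξ ∧
      x₂ (k + 1) = pt (ξ + β / 5) (ξ - 2 * (β / 5)) := by
    intro k h1 h2
    have hbar : xbar k = pt (ξ - β / 5) ξ := by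
      rw [hxbar k, h1, h2]
      refine hext _ _ ?_ ?_ <;> (simp [pt]; try ring)
    refine ⟨hbar, ?_, ?_⟩
    · have hz : (2 : ℝ) • xbar k - x₁ k = pt (ξ - 2 * (β / 5)) (ξ + β / 5) := by
        rw [hbar, h1]; refine hext _ _ ?_ ?_ <;> (simp [pt]; try ring)
      have hcond : |pt (ξ - 2 * (β / 5)) (ξ + β / 5) 0 - pt (ξ - 2 * (β / 5)) (ξ + β / 5) 1| ≤ α := by
        show |ξ - 2 * (β / 5) - (ξ + β / 5)| ≤ α
        rw [show ξ - 2 * (β / 5) - (ξ + β / 5) = -(3 * (β / 5)) by ring, abs_neg,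
          abs_of_nonneg (by linarith)]
        linarith
      rw [hx₁ k, hz, hP₁id _ hcond, hbar, h1]
      refine hext _ _ ?_ ?_ <;> (simp [pt]; try ring)
    · have hz : (2 : ℝ) • xbar k - x₂ k = pt ξ (ξ - β / 5) := by
        rw [hbar, h2]; refine hext _ _ ?_ ?_ <;> (simp [pt]; try ring)
      have hP2 : P₂ (pt ξ (ξ - β / 5)) = pt ((ξ + (ξ - β / 5) + β) / 2) ((ξ + (ξ - β / 5) - β) / 2) := by
        have hc1 : ¬ (β ≤ |pt ξ (ξ - β / 5) 0 - pt ξ (ξ - β / 5) 1|) := by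
          show ¬ (β ≤ |ξ - (ξ - β / 5)|)
          rw [show ξ - (ξ - β / 5) = β / 5 by ring, abs_of_nonneg (by linarith)]
          linarith
        have hc2 : ¬ (pt ξ (ξ - β / 5) 0 ≤ pt ξ (ξ - β / 5) 1) := by
          show ¬ (ξ ≤ ξ - β / 5); linarith
        rw [hP₂, if_neg hc1, if_neg hc2]; rfl
      rw [hx₂ k, hz, hP2, hbar, h2]
      refine hext _ _ ?_ ?_ <;> (simp [pt]; try ring)
  have stepB : ∀ k, x₁ k = pt (ξ - β / 5) ξ → x₂ k = pt (ξ + β / 5) (ξ - 2 * (β / 5)) →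
      xbar k = pt ξ (ξ - β / 5) ∧ x₁ (k + 1) = pt ξ (ξ - β / 5) ∧
      x₂ (k + 1) = pt (ξ - 2 * (β / 5)) (ξ + β / 5) := by
    intro k h1 h2
    have hbar : xbar k = pt ξ (ξ - β / 5) := by
      rw [hxbar k, h1, h2]
      refine hext _ _ ?_ ?_ <;> (simp [pt]; try ring)
    refine ⟨hbar, ?_, ?_⟩
    · have hz : (2 : ℝ) • xbar k - x₁ k = pt (ξ + β / 5) (ξ - 2 * (β / 5)) := by
        rw [hbar, h1]; refine hext _ _ ?_ ?_ <;> (simp [pt]; try ring)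
      have hcond : |pt (ξ + β / 5) (ξ - 2 * (β / 5)) 0 - pt (ξ + β / 5) (ξ - 2 * (β / 5)) 1| ≤ α := by
        show |ξ + β / 5 - (ξ - 2 * (β / 5))| ≤ α
        rw [show ξ + β / 5 - (ξ - 2 * (β / 5)) = 3 * (β / 5) by ring,
          abs_of_nonneg (by linarith)]
        linarith
      rw [hx₁ k, hz, hP₁id _ hcond, hbar, h1]
      refine hext _ _ ?_ ?_ <;> (simp [pt]; try ring)
    · have hz : (2 : ℝ) • xbar k - x₂ k = pt (ξ - β / 5) ξ := by
        rw [hbar, h2]; refine hext _ _ ?_ ?_ <;> (simp [pt]; try ring)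
      have hP2 : P₂ (pt (ξ - β / 5) ξ) = pt ((ξ - β / 5 + ξ - β) / 2) ((ξ - β / 5 + ξ + β) / 2) := by
        have hc1 : ¬ (β ≤ |pt (ξ - β / 5) ξ 0 - pt (ξ - β / 5) ξ 1|) := by
          show ¬ (β ≤ |ξ - β / 5 - ξ|)
          rw [show ξ - β / 5 - ξ = -(β / 5) by ring, abs_neg, abs_of_nonneg (by linarith)]
          linarith
        have hc2 : pt (ξ - β / 5) ξ 0 ≤ pt (ξ - β / 5) ξ 1 := by
          show ξ - β / 5 ≤ ξ; linarith
        rw [hP₂, if_neg hc1, if_pos hc2]; rfl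
      rw [hx₂ k, hz, hP2, hbar, h2]
      refine hext _ _ ?_ ?_ <;> (simp [pt]; try ring)
  have main : ∀ k : ℕ,
      x₁ (2 * k) = pt ξ (ξ - β / 5) ∧ x₂ (2 * k) = pt (ξ - 2 * (β / 5)) (ξ + β / 5) ∧
      x₁ (2 * k + 1) = pt (ξ - β / 5) ξ ∧ x₂ (2 * k + 1) = pt (ξ + β / 5) (ξ - 2 * (β / 5)) ∧
      xbar (2 * k) = pt (ξ - β / 5) ξ ∧ xbar (2 * k + 1) = pt ξ (ξ - β / 5) := by
    intro k
    induction k with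
    | zero =>
      obtain ⟨hb0, h11, h21⟩ := stepA 0 hx₁0 hx₂0
      obtain ⟨hb1, _, _⟩ := stepB 1 h11 h21
      exact ⟨hx₁0, hx₂0, h11, h21, hb0, hb1⟩
    | succ k ih =>
      obtain ⟨_, _, h11, h21, _, _⟩ := ih
      obtain ⟨hb1, h12, h22⟩ := stepB (2 * k + 1) h11 h21
      have e1 : 2 * (k + 1) = 2 * k + 1 + 1 := by ring
      obtain ⟨hb2, h13, h23⟩ := stepA (2 * k + 1 + 1) h12 h22
      obtain ⟨hb3, _, _⟩ := stepB (2 * k + 1 + 1 + 1) h13 h23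
      rw [e1]
      exact ⟨h12, h22, h13, h23, hb2, hb3⟩
  refine ⟨main, ?_⟩
  rintro ⟨L, hL⟩
  have htwo : Filter.Tendsto (fun k : ℕ => 2 * k) Filter.atTop Filter.atTop :=
    Filter.tendsto_atTop_atTop.mpr fun b => ⟨b, fun a ha => by omega⟩
  have hodd : Filter.Tendsto (fun k : ℕ => 2 * k + 1) Filter.atTop Filter.atTop :=
    Filter.tendsto_atTop_atTop.mpr fun b => ⟨b, fun a ha => by omega⟩
  have h1 : Filter.Tendsto (fun k => xbar (2 * k)) Filter.atTop (nhds L) := hL.comp htwo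
  have h2 : Filter.Tendsto (fun k => xbar (2 * k + 1)) Filter.atTop (nhds L) := hL.comp hodd
  rw [show (fun k => xbar (2 * k)) = fun _ => pt (ξ - β / 5) ξ from
    funext fun k => (main k).2.2.2.2.1] at h1
  rw [show (fun k => xbar (2 * k + 1)) = fun _ => pt ξ (ξ - β / 5) from
    funext fun k => (main k).2.2.2.2.2] at h2
  have hLa := tendsto_nhds_unique h1 tendsto_const_nhds
  have hLb := tendsto_nhds_unique h2 tendsto_const_nhds
  have heq : pt (ξ - β / 5) ξ = pt ξ (ξ - β / 5) := hLa.symm.trans hLb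
  have : ξ - β / 5 = ξ := congrArg (fun v => v 0) heq
  linarith
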